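/- arXiv:2312.07862 — 2 statements merged into one kernel-verified Lean document; each statement's English description precedes it below -/
import Mathlib

section
/- Lower bound in the joint+marginal lemma: suppose the map y ↦ T(y) is m-measurable (in particular this holds when the solution sets P*_y are nonempty for all y). Then every probability measure P on X×Y that is absolutely continuous with respect to λ⊗ν and has Y-marginal m satisfies ∫_{X×Y} l dP + ∫_{X×Y} |dP − dQ| ≥ ∫_Y T(y) m(dy). Consequently R ≥ ∫_Y T(y) m(dy). -/
/-!
Let `f`, `q` be the densities of `P`, `Q` with respect to `λ ⊗ ν`. Both have `Y`-marginal `m`, so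
`g(y) = ∫ f(x,y) dλ = ∫ q(x,y) dλ` for a.e. `y`, and on each fibre with `0 < g(y) < ∞` the
conditional law `f(·,y) / g(y) • λ` competes in the infimum defining `T(y)`. Multiplying by `g(y)`
and integrating over `ν` gives `∫ T dm ≤ ∫ l dP + ∫ |f - q|`.

Since `X` is not assumed countably generated, the disintegration `Q = ψ ⊗ m` yields the identity
`g(y) ∫ H(·,y) dψ(·|y) = ∫ H(·,y) q(·,y) dλ` for a.e. `y` only for each fixed test function `H`,
with an exceptional set depending on `H`. The conditional law is therefore expressed through
`ψ(·|y)` and the ratio `f / q`, so that three such identities control its mass, its `l`-integral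
and its distance to `ψ(·|y)`.
-/

open MeasureTheory
open scoped ENNReal NNReal

noncomputable section

namespace DIMG

/-- `L¹` distance of the densities of two measures on `X` with respect to the reference
measure `λ` (equal to twice the total variation distance when both are `≪ λ`):
`∫_X |dη/dλ − dη'/dλ| dλ`. -/
noncomputable def tvX {X : Type*} [MeasurableSpace X] (lam : Measure X)
    (η η' : Measure X) : ℝ :=
  ∫ x, |(η.rnDeriv lam x).toReal - (η'.rnDeriv lam x).toReal| ∂lam

/-- `L¹` distance of the densities of two measures on `X × Y` with respect to the reference
measure `λ⊗ν`: `∫_{X×Y} |dP − dP'|`. -/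
noncomputable def tvJ {X Y : Type*} [MeasurableSpace X] [MeasurableSpace Y]
    (lam : Measure X) (ν : Measure Y) (P P' : Measure (X × Y)) : ℝ :=
  ∫ p, |(P.rnDeriv (lam.prod ν) p).toReal - (P'.rnDeriv (lam.prod ν) p).toReal| ∂(lam.prod ν)

/-- The joint measure `P(dx,dy) = φ(dx|y) m(dy)` on `X × Y` built from a marginal `m` on `Y`
and a family of conditional laws `φ(·|y)` on `X`. -/
noncomputable def mixJoint {X Y : Type*} [MeasurableSpace X] [MeasurableSpace Y]
    (m : Measure Y) (φ : Y → Measure X) : Measure (X × Y) :=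
  m.bind fun y => (φ y).map fun x => (x, y)

/-- The parametric ("interim") value
`T(y) := inf over η ∈ P(X), η ≪ λ of [∫_X l(x,y) η(dx) + ∫_X |dη/dλ − dψ(·|y)/dλ| dλ]`. -/
noncomputable def Tval {X Y : Type*} [MeasurableSpace X] [MeasurableSpace Y]
    (lam : Measure X) (l : X → Y → ℝ) (ψ : Y → Measure X) (y : Y) : ℝ :=
  ⨅ η : {η : Measure X // IsProbabilityMeasure η ∧ η ≪ lam},
    (∫ x, l x y ∂(η : Measure X)) + tvX lam (η : Measure X) (ψ y)

/-- The joint ("ex ante") value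
`R := inf over P ∈ P(X×Y), P ≪ λ⊗ν with Y-marginal m of [∫ l dP + ∫|dP − dQ|]`. -/
noncomputable def Rval {X Y : Type*} [MeasurableSpace X] [MeasurableSpace Y]
    (lam : Measure X) (ν : Measure Y) (l : X → Y → ℝ) (m : Measure Y)
    (Q : Measure (X × Y)) : ℝ :=
  ⨅ P : {P : Measure (X × Y) //
      IsProbabilityMeasure P ∧ P ≪ lam.prod ν ∧ P.map Prod.snd = m},
    (∫ p, l p.1 p.2 ∂(P : Measure (X × Y))) + tvJ lam ν (P : Measure (X × Y)) Q


open ProbabilityTheory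

def absDiff (a b : ℝ≥0∞) : ℝ≥0∞ := (a - b) + (b - a)

lemma toReal_absDiff {a b : ℝ≥0∞} (ha : a ≠ ∞) (hb : b ≠ ∞) :
    (absDiff a b).toReal = |a.toReal - b.toReal| := by
  rcases le_total a b with h | h
  · rw [absDiff, tsub_eq_zero_of_le h, zero_add, ENNReal.toReal_sub_of_le h hb, abs_sub_comm,
      abs_of_nonneg (sub_nonneg.2 (ENNReal.toReal_mono hb h))]
  · rw [absDiff, tsub_eq_zero_of_le h, add_zero, ENNReal.toReal_sub_of_le h ha,
      abs_of_nonneg (sub_nonneg.2 (ENNReal.toReal_mono ha h))]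

lemma absDiff_le_add (a b : ℝ≥0∞) : absDiff a b ≤ a + b :=
  add_le_add tsub_le_self tsub_le_self

lemma absDiff_add_le (a b e : ℝ≥0∞) : absDiff (a + e) b ≤ absDiff a b + e := by
  rw [absDiff, absDiff, add_right_comm]
  gcongr
  · rw [tsub_le_iff_right, add_right_comm]; gcongr; exact le_tsub_add
  · exact le_self_add

lemma mul_absDiff {c : ℝ≥0∞} (hc : c ≠ ∞) (a b : ℝ≥0∞) :
    c * absDiff a b = absDiff (c * a) (c * b) := by
  rw [absDiff, absDiff, mul_add, ENNReal.mul_sub fun _ _ => hc, ENNReal.mul_sub fun _ _ => hc]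

@[fun_prop]
lemma Measurable.absDiff {α : Type*} [MeasurableSpace α] {f g : α → ℝ≥0∞} (hf : Measurable f)
    (hg : Measurable g) : Measurable fun x => absDiff (f x) (g x) :=
  (hf.sub hg).add (hg.sub hf)

lemma integral_abs_toReal_sub {α : Type*} [MeasurableSpace α] {μ : Measure α}
    {f g : α → ℝ≥0∞} (hf : Measurable f) (hg : Measurable g) (hf_fin : ∀ᵐ x ∂μ, f x < ∞)
    (hg_fin : ∀ᵐ x ∂μ, g x < ∞) :
    ∫ x, |(f x).toReal - (g x).toReal| ∂μ = (∫⁻ x, absDiff (f x) (g x) ∂μ).toReal := by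
  rw [← integral_toReal (Measurable.absDiff hf hg).aemeasurable]
  · refine integral_congr_ae ?_
    filter_upwards [hf_fin, hg_fin] with x hfx hgx
    exact (toReal_absDiff hfx.ne hgx.ne).symm
  · filter_upwards [hf_fin, hg_fin] with x hfx hgx
    exact (absDiff_le_add _ _).trans_lt (ENNReal.add_lt_top.2 ⟨hfx, hgx⟩)

lemma abs_integral_le_of_forall_abs_le {α : Type*} [MeasurableSpace α] (μ : Measure α)
    [IsProbabilityMeasure μ] {h : α → ℝ} {C : ℝ} (hC : ∀ a, |h a| ≤ C) :
    |∫ a, h a ∂μ| ≤ C := by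
  simpa using norm_integral_le_of_norm_le_const (μ := μ)
    (.of_forall fun a => (Real.norm_eq_abs (h a)).trans_le (hC a))

lemma integral_eq_toReal_lintegral_ofReal_add_sub {α : Type*} [MeasurableSpace α]
    (μ : Measure α) [IsProbabilityMeasure μ] {h : α → ℝ} (hm : Measurable h) {C : ℝ}
    (hC : ∀ a, |h a| ≤ C) :
    ∫ a, h a ∂μ = (∫⁻ a, ENNReal.ofReal (h a + C) ∂μ).toReal - C := by
  have hint : Integrable h μ :=
    (integrable_const C).mono' hm.aestronglyMeasurable (.of_forall hC)
  have hnonneg : ∀ a, 0 ≤ h a + C := fun a => by linarith [neg_abs_le (h a), hC a]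
  rw [← integral_eq_lintegral_of_nonneg_ae (f := fun a => h a + C) (.of_forall hnonneg)
    (hm.add measurable_const).aestronglyMeasurable, integral_add hint (integrable_const C)]
  simp

section Fiber

variable {X : Type*}

def ratio (f q : X → ℝ≥0∞) (x : X) : ℝ≥0∞ := if q x = 0 then 0 else f x / q x

@[fun_prop]
lemma measurable_ratio [MeasurableSpace X] {f q : X → ℝ≥0∞} (hf : Measurable f)
    (hq : Measurable q) :
    Measurable (ratio f q) :=
  Measurable.ite (hq (measurableSet_singleton 0)) measurable_const (hf.div hq)

lemma ratio_mul_add_indicator (f : X → ℝ≥0∞) {q : X → ℝ≥0∞} {x : X} (hx : q x ≠ ∞) :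
    ratio f q x * q x + {x | q x = 0}.indicator f x = f x := by
  by_cases h : q x = 0
  · simp [ratio, h]
  · simp [ratio, h, ENNReal.div_mul_cancel h hx]

lemma absDiff_ratio_one_mul_add_indicator (f : X → ℝ≥0∞) {q : X → ℝ≥0∞} {x : X}
    (hx : q x ≠ ∞) :
    absDiff (ratio f q x) 1 * q x + {x | q x = 0}.indicator f x = absDiff (f x) (q x) := by
  by_cases h : q x = 0
  · simp [ratio, absDiff, h]
  · simp only [ratio, h, if_false, Set.indicator_of_notMem (show x ∉ {x | q x = 0} from h),
      add_zero]
    rw [mul_comm, mul_absDiff hx, mul_one, mul_comm, ENNReal.div_mul_cancel h hx]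

variable [MeasurableSpace X] (lam ψ : Measure X) (f q : X → ℝ≥0∞) (c : ℝ≥0∞)

/-- The measure `c⁻¹ f • lam` with its part on `{q ≠ 0}` rewritten as `ratio f q • ψ`, which
agrees with it when `ψ = c⁻¹ q • lam`. -/
def fiberMeasure : Measure X :=
  lam.withDensity fun x => ψ.rnDeriv lam x * ratio f q x + c⁻¹ * {x | q x = 0}.indicator f x

variable {lam ψ f q c}

lemma mul_lintegral_rnDeriv_mul_add_inv_mul [SigmaFinite lam] [SigmaFinite ψ] (hψ : ψ ≪ lam)
    (hc0 : c ≠ 0) (hc : c ≠ ∞) {G H : X → ℝ≥0∞} (hG : Measurable G) (hH : Measurable H) :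
    c * ∫⁻ x, (ψ.rnDeriv lam x * G x + c⁻¹ * H x) ∂lam = c * ∫⁻ x, G x ∂ψ + ∫⁻ x, H x ∂lam := by
  rw [lintegral_add_left (by fun_prop),
    lintegral_rnDeriv_mul hψ hG.aemeasurable, lintegral_const_mul _ hH, mul_add,
    ← mul_assoc, ENNReal.mul_inv_cancel hc0 hc, one_mul]

lemma mul_lintegral_fiberMeasure [SigmaFinite lam] [SigmaFinite ψ] (hψ : ψ ≪ lam)
    (hf : Measurable f) (hq : Measurable q) (hq_fin : ∀ᵐ x ∂lam, q x < ∞) (hc0 : c ≠ 0)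
    (hc : c ≠ ∞) {F : X → ℝ≥0∞} (hF : Measurable F)
    (hdis : c * ∫⁻ x, ratio f q x * F x ∂ψ = ∫⁻ x, ratio f q x * F x * q x ∂lam) :
    c * ∫⁻ x, F x ∂fiberMeasure lam ψ f q c = ∫⁻ x, f x * F x ∂lam := by
  have hind : Measurable ({x | q x = 0}.indicator f) :=
    hf.indicator (hq (measurableSet_singleton 0))
  rw [fiberMeasure, lintegral_withDensity_eq_lintegral_mul _ (by fun_prop) hF]
  calc c * ∫⁻ x, (ψ.rnDeriv lam x * ratio f q x + c⁻¹ * {x | q x = 0}.indicator f x) * F x ∂lam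
      = c * ∫⁻ x, (ψ.rnDeriv lam x * (ratio f q x * F x)
          + c⁻¹ * ({x | q x = 0}.indicator f x * F x)) ∂lam := by
        simp only [add_mul, mul_assoc]
    _ = ∫⁻ x, ratio f q x * F x * q x ∂lam + ∫⁻ x, {x | q x = 0}.indicator f x * F x ∂lam := by
        rw [mul_lintegral_rnDeriv_mul_add_inv_mul hψ hc0 hc (by fun_prop) (by fun_prop), hdis]
    _ = ∫⁻ x, f x * F x ∂lam := by
        rw [← lintegral_add_left (by fun_prop)]
        refine lintegral_congr_ae ?_
        filter_upwards [hq_fin] with x hx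
        rw [← ratio_mul_add_indicator f hx.ne, add_mul]
        ring

lemma isProbabilityMeasure_fiberMeasure [SigmaFinite lam] [SigmaFinite ψ] (hψ : ψ ≪ lam)
    (hf : Measurable f) (hq : Measurable q) (hq_fin : ∀ᵐ x ∂lam, q x < ∞) (hc0 : c ≠ 0)
    (hc : c ≠ ∞) (hfc : ∫⁻ x, f x ∂lam = c)
    (hdis : c * ∫⁻ x, ratio f q x ∂ψ = ∫⁻ x, ratio f q x * q x ∂lam) :
    IsProbabilityMeasure (fiberMeasure lam ψ f q c) := by
  have h := mul_lintegral_fiberMeasure hψ hf hq hq_fin hc0 hc measurable_const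
    (F := fun _ => 1) (by simpa only [mul_one] using hdis)
  simp only [lintegral_const, one_mul, mul_one, hfc] at h
  exact ⟨(ENNReal.mul_eq_left hc0 hc).1 h⟩

lemma mul_lintegral_absDiff_rnDeriv_fiberMeasure_le [SigmaFinite lam] [SigmaFinite ψ]
    (hψ : ψ ≪ lam) (hf : Measurable f) (hq : Measurable q) (hq_fin : ∀ᵐ x ∂lam, q x < ∞)
    (hc0 : c ≠ 0) (hc : c ≠ ∞)
    (hdis : c * ∫⁻ x, absDiff (ratio f q x) 1 ∂ψ = ∫⁻ x, absDiff (ratio f q x) 1 * q x ∂lam) :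
    c * ∫⁻ x, absDiff ((fiberMeasure lam ψ f q c).rnDeriv lam x) (ψ.rnDeriv lam x) ∂lam
      ≤ ∫⁻ x, absDiff (f x) (q x) ∂lam := by
  have hind : Measurable ({x | q x = 0}.indicator f) :=
    hf.indicator (hq (measurableSet_singleton 0))
  have hW : Measurable fun x => absDiff (ratio f q x) 1 :=
    Measurable.absDiff (measurable_ratio hf hq) measurable_const
  calc c * ∫⁻ x, absDiff ((fiberMeasure lam ψ f q c).rnDeriv lam x) (ψ.rnDeriv lam x) ∂lam
      ≤ c * ∫⁻ x, (ψ.rnDeriv lam x * absDiff (ratio f q x) 1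
          + c⁻¹ * {x | q x = 0}.indicator f x) ∂lam := by
        refine mul_le_mul_right (lintegral_mono_ae ?_) c
        filter_upwards [Measure.rnDeriv_withDensity lam (by fun_prop : Measurable fun x =>
            ψ.rnDeriv lam x * ratio f q x + c⁻¹ * {x | q x = 0}.indicator f x),
          Measure.rnDeriv_lt_top ψ lam] with x hη hr
        rw [fiberMeasure, hη, mul_absDiff hr.ne, mul_one]
        exact absDiff_add_le _ _ _
    _ = ∫⁻ x, absDiff (ratio f q x) 1 * q x ∂lam + ∫⁻ x, {x | q x = 0}.indicator f x ∂lam := by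
        rw [mul_lintegral_rnDeriv_mul_add_inv_mul hψ hc0 hc hW hind, hdis]
    _ = ∫⁻ x, absDiff (f x) (q x) ∂lam := by
        rw [← lintegral_add_left (by fun_prop)]
        refine lintegral_congr_ae ?_
        filter_upwards [hq_fin] with x hx
        exact absDiff_ratio_one_mul_add_indicator f hx.ne

end Fiber

lemma neg_le_integral_add_tvX {X : Type*} [MeasurableSpace X] (lam : Measure X) {h : X → ℝ}
    {C : ℝ} (hC : ∀ x, |h x| ≤ C) (η : Measure X) [IsProbabilityMeasure η] (ξ : Measure X) :
    -C ≤ ∫ x, h x ∂η + tvX lam η ξ := by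
  have := (abs_le.1 (abs_integral_le_of_forall_abs_le η hC)).1
  have : 0 ≤ tvX lam η ξ := integral_nonneg fun _ => abs_nonneg _
  linarith

section Tval

variable {X Y : Type*} [MeasurableSpace X] [MeasurableSpace Y] {lam : Measure X}
  {l : X → Y → ℝ} {ψ : Y → Measure X} {y : Y} {C : ℝ}

lemma Tval_le (hC : ∀ x, |l x y| ≤ C) (η : Measure X) [IsProbabilityMeasure η] (hη : η ≪ lam) :
    Tval lam l ψ y ≤ ∫ x, l x y ∂η + tvX lam η (ψ y) := by
  refine ciInf_le ⟨-C, ?_⟩ (⟨η, inferInstance, hη⟩ : {η : Measure X // _})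
  rintro _ ⟨⟨η', hη', -⟩, rfl⟩
  exact neg_le_integral_add_tvX lam hC η' (ψ y)

lemma abs_Tval_le (hC : ∀ x, |l x y| ≤ C) [IsProbabilityMeasure (ψ y)] (hψ : ψ y ≪ lam) :
    |Tval lam l ψ y| ≤ C := by
  have : Nonempty {η : Measure X // IsProbabilityMeasure η ∧ η ≪ lam} :=
    ⟨⟨ψ y, inferInstance, hψ⟩⟩
  refine abs_le.2 ⟨le_ciInf fun ⟨η, hη, _⟩ => neg_le_integral_add_tvX lam hC η (ψ y), ?_⟩
  calc Tval lam l ψ y ≤ ∫ x, l x y ∂ψ y + tvX lam (ψ y) (ψ y) := Tval_le hC (ψ y) hψ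
    _ ≤ C := by simpa [tvX] using (abs_le.1 (abs_integral_le_of_forall_abs_le (ψ y) hC)).2

lemma ofReal_Tval_add_le [SigmaFinite lam] [SigmaFinite (ψ y)] (hl : Measurable fun x => l x y)
    (hC : ∀ x, |l x y| ≤ C) (η : Measure X) [IsProbabilityMeasure η] (hη : η ≪ lam) :
    ENNReal.ofReal (Tval lam l ψ y + C) ≤ ∫⁻ x, ENNReal.ofReal (l x y + C) ∂η
      + ∫⁻ x, absDiff (η.rnDeriv lam x) ((ψ y).rnDeriv lam x) ∂lam := by
  have hT := Tval_le (ψ := ψ) hC η hη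
  rw [integral_eq_toReal_lintegral_ofReal_add_sub η hl hC, tvX,
    integral_abs_toReal_sub (Measure.measurable_rnDeriv _ _) (Measure.measurable_rnDeriv _ _)
      (Measure.rnDeriv_lt_top _ _) (Measure.rnDeriv_lt_top _ _)] at hT
  calc ENNReal.ofReal (Tval lam l ψ y + C)
      ≤ ENNReal.ofReal ((∫⁻ x, ENNReal.ofReal (l x y + C) ∂η).toReal
          + (∫⁻ x, absDiff (η.rnDeriv lam x) ((ψ y).rnDeriv lam x) ∂lam).toReal) :=
        ENNReal.ofReal_le_ofReal (by linarith)
    _ ≤ _ := by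
        rw [ENNReal.ofReal_add ENNReal.toReal_nonneg ENNReal.toReal_nonneg]
        exact add_le_add ENNReal.ofReal_toReal_le ENNReal.ofReal_toReal_le

lemma mul_ofReal_Tval_add_le [SigmaFinite lam] [IsProbabilityMeasure (ψ y)]
    (hψ : ψ y ≪ lam) (hl : Measurable fun x => l x y) (hC : ∀ x, |l x y| ≤ C)
    {f q : X → ℝ≥0∞} (hf : Measurable f) (hq : Measurable q) (hq_fin : ∀ᵐ x ∂lam, q x < ∞)
    {c : ℝ≥0∞} (hc : c ≠ ∞) (hfc : ∫⁻ x, f x ∂lam = c)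
    (hdis_one : c * ∫⁻ x, ratio f q x ∂ψ y = ∫⁻ x, ratio f q x * q x ∂lam)
    (hdis_l : c * ∫⁻ x, ratio f q x * ENNReal.ofReal (l x y + C) ∂ψ y
      = ∫⁻ x, ratio f q x * ENNReal.ofReal (l x y + C) * q x ∂lam)
    (hdis_absDiff : c * ∫⁻ x, absDiff (ratio f q x) 1 ∂ψ y
      = ∫⁻ x, absDiff (ratio f q x) 1 * q x ∂lam) :
    c * ENNReal.ofReal (Tval lam l ψ y + C)
      ≤ ∫⁻ x, f x * ENNReal.ofReal (l x y + C) ∂lam + ∫⁻ x, absDiff (f x) (q x) ∂lam := by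
  rcases eq_or_ne c 0 with rfl | hc0
  · simp
  have := isProbabilityMeasure_fiberMeasure hψ hf hq hq_fin hc0 hc hfc hdis_one
  calc c * ENNReal.ofReal (Tval lam l ψ y + C)
      ≤ c * (∫⁻ x, ENNReal.ofReal (l x y + C) ∂fiberMeasure lam (ψ y) f q c
          + ∫⁻ x, absDiff ((fiberMeasure lam (ψ y) f q c).rnDeriv lam x)
            ((ψ y).rnDeriv lam x) ∂lam) :=
        mul_le_mul_right (ofReal_Tval_add_le hl hC (fiberMeasure lam (ψ y) f q c)
          (withDensity_absolutelyContinuous _ _)) c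
    _ ≤ _ := by
        rw [mul_add, mul_lintegral_fiberMeasure hψ hf hq hq_fin hc0 hc (by fun_prop) hdis_l]
        gcongr
        exact mul_lintegral_absDiff_rnDeriv_fiberMeasure_le hψ hf hq hq_fin hc0 hc hdis_absDiff

end Tval

section Joint

variable {X Y : Type*} [MeasurableSpace X] [MeasurableSpace Y]

lemma lintegral_mixJoint (m : Measure Y) (κ : Kernel Y X) [IsSFiniteKernel κ]
    {H : X × Y → ℝ≥0∞} (hH : Measurable H) :
    ∫⁻ p, H p ∂mixJoint m κ = ∫⁻ y, ∫⁻ x, H (x, y) ∂κ y ∂m := by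
  have hκ : (fun y => (κ y).map fun x => (x, y)) = κ ×ₖ Kernel.id := by
    ext1 y
    rw [Kernel.prod_apply, Kernel.id_apply, Measure.prod_dirac]
  rw [mixJoint, Measure.lintegral_bind (hκ ▸ (κ ×ₖ Kernel.id).measurable.aemeasurable)
    hH.aemeasurable]
  exact lintegral_congr fun y => lintegral_map hH measurable_prodMk_right

lemma map_snd_eq_withDensity {lam : Measure X} {ν : Measure Y} [SigmaFinite lam] [SigmaFinite ν]
    {R : Measure (X × Y)} [SigmaFinite R] (hR : R ≪ lam.prod ν) :
    R.map Prod.snd = ν.withDensity fun y => ∫⁻ x, R.rnDeriv (lam.prod ν) (x, y) ∂lam := by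
  ext s hs
  rw [Measure.map_apply measurable_snd hs, withDensity_apply _ hs, ← Set.univ_prod,
    ← Measure.setLIntegral_rnDeriv hR,
    setLIntegral_prod_symm _ (Measure.measurable_rnDeriv _ _).aemeasurable,
    Measure.restrict_univ]

lemma ae_mul_lintegral_eq_lintegral_mul_rnDeriv {lam : Measure X} {ν : Measure Y} [SigmaFinite lam]
    [SigmaFinite ν] {m : Measure Y} {κ : Kernel Y X} [IsSFiniteKernel κ] {Q : Measure (X × Y)}
    [SigmaFinite Q] (hQ : Q = mixJoint m κ) (hQac : Q ≪ lam.prod ν) {g : Y → ℝ≥0∞}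
    (hg : Measurable g) (hm : m = ν.withDensity g) {H : X × Y → ℝ≥0∞} (hH : Measurable H) :
    ∀ᵐ y ∂ν, g y * ∫⁻ x, H (x, y) ∂κ y
      = ∫⁻ x, H (x, y) * Q.rnDeriv (lam.prod ν) (x, y) ∂lam := by
  have hq : Measurable (Q.rnDeriv (lam.prod ν)) := Measure.measurable_rnDeriv _ _
  have hK : Measurable fun y => ∫⁻ x, H (x, y) ∂κ y :=
    (hH.comp measurable_swap).lintegral_kernel_prod_right'
  have key : ∀ {H : X × Y → ℝ≥0∞}, Measurable H → ∫⁻ y, ∫⁻ x, H (x, y) ∂κ y ∂m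
      = ∫⁻ y, ∫⁻ x, H (x, y) * Q.rnDeriv (lam.prod ν) (x, y) ∂lam ∂ν := fun {H} hH => by
    rw [← lintegral_mixJoint m κ hH, ← hQ, ← lintegral_rnDeriv_mul hQac hH.aemeasurable,
      lintegral_prod_symm' (fun p => Q.rnDeriv (lam.prod ν) p * H p) (hq.mul hH)]
    simp only [mul_comm]
  refine ae_eq_of_forall_setLIntegral_eq_of_sigmaFinite (hg.mul hK)
    (hH.mul hq).lintegral_prod_left' fun B hB _ => ?_
  have hκB : (fun y => ∫⁻ x, (Prod.snd ⁻¹' B).indicator H (x, y) ∂κ y)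
      = B.indicator fun y => ∫⁻ x, H (x, y) ∂κ y := by
    ext y; by_cases hy : y ∈ B <;> simp [hy, Set.indicator]
  have hlamB : (fun y => ∫⁻ x, (Prod.snd ⁻¹' B).indicator H (x, y)
        * Q.rnDeriv (lam.prod ν) (x, y) ∂lam)
      = B.indicator fun y => ∫⁻ x, H (x, y) * Q.rnDeriv (lam.prod ν) (x, y) ∂lam := by
    ext y; by_cases hy : y ∈ B <;> simp [hy, Set.indicator]
  have hkey := key (hH.indicator (measurable_snd hB))
  rw [hκB, hlamB, lintegral_indicator hB, lintegral_indicator hB, hm,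
    setLIntegral_withDensity_eq_setLIntegral_mul _ hg hK hB] at hkey
  exact hkey

lemma ae_lintegral_rnDeriv_slice_lt_top (lam : Measure X) (ν : Measure Y) [SFinite lam]
    [SFinite ν] (R : Measure (X × Y)) [IsFiniteMeasure R] :
    ∀ᵐ y ∂ν, ∫⁻ x, R.rnDeriv (lam.prod ν) (x, y) ∂lam < ∞ := by
  refine ae_lt_top (Measure.measurable_rnDeriv _ _).lintegral_prod_left'
    (ne_top_of_le_ne_top (measure_ne_top R Set.univ) ?_)
  rw [← lintegral_prod_symm' _ (Measure.measurable_rnDeriv _ _)]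
  exact Measure.lintegral_rnDeriv_le

lemma ae_ae_rnDeriv_lt_top (lam : Measure X) (ν : Measure Y) [SFinite lam] [SFinite ν]
    (R : Measure (X × Y)) [SigmaFinite R] :
    ∀ᵐ y ∂ν, ∀ᵐ x ∂lam, R.rnDeriv (lam.prod ν) (x, y) < ∞ :=
  (Measure.ae_ae_comm (p := fun x y => R.rnDeriv (lam.prod ν) (x, y) < ∞)
    (measurableSet_lt (Measure.measurable_rnDeriv _ _) measurable_const)).1
    ((Measure.ae_prod_iff_ae_ae (measurableSet_lt (Measure.measurable_rnDeriv _ _)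
      measurable_const)).1 (Measure.rnDeriv_lt_top _ _))

lemma lintegral_rnDeriv_slice_ae_eq_of_map_snd_eq {lam : Measure X} {ν : Measure Y}
    [SigmaFinite lam] [SigmaFinite ν] {P Q : Measure (X × Y)} [SigmaFinite P] [SigmaFinite Q]
    (hP : P ≪ lam.prod ν) (hQ : Q ≪ lam.prod ν) (hPQ : P.map Prod.snd = Q.map Prod.snd) :
    (fun y => ∫⁻ x, P.rnDeriv (lam.prod ν) (x, y) ∂lam)
      =ᵐ[ν] fun y => ∫⁻ x, Q.rnDeriv (lam.prod ν) (x, y) ∂lam :=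
  (withDensity_eq_iff_of_sigmaFinite
    (Measure.measurable_rnDeriv _ _).lintegral_prod_left'.aemeasurable
    (Measure.measurable_rnDeriv _ _).lintegral_prod_left'.aemeasurable).1
    ((map_snd_eq_withDensity hP).symm.trans (hPQ.trans (map_snd_eq_withDensity hQ)))

lemma lintegral_ofReal_Tval_add_le {lam : Measure X} {ν : Measure Y} [SigmaFinite lam]
    [SigmaFinite ν] {l : X → Y → ℝ} (hl : Measurable fun p : X × Y => l p.1 p.2) {C : ℝ}
    (hC : ∀ x y, |l x y| ≤ C) {m : Measure Y} {κ : Kernel Y X}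
    [IsMarkovKernel κ] (hκ : ∀ y, κ y ≪ lam) {Q : Measure (X × Y)} [IsFiniteMeasure Q]
    (hQ : Q = mixJoint m κ) (hQac : Q ≪ lam.prod ν) (hQm : Q.map Prod.snd = m)
    (hT : Measurable (Tval lam l κ)) {P : Measure (X × Y)} [IsFiniteMeasure P]
    (hPac : P ≪ lam.prod ν) (hPm : P.map Prod.snd = m) :
    ∫⁻ y, ENNReal.ofReal (Tval lam l κ y + C) ∂m
      ≤ ∫⁻ p, ENNReal.ofReal (l p.1 p.2 + C) ∂P
        + ∫⁻ p, absDiff (P.rnDeriv (lam.prod ν) p) (Q.rnDeriv (lam.prod ν) p) ∂lam.prod ν := by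
  set f := P.rnDeriv (lam.prod ν)
  set q := Q.rnDeriv (lam.prod ν)
  set g : Y → ℝ≥0∞ := fun y => ∫⁻ x, q (x, y) ∂lam
  set L : X × Y → ℝ≥0∞ := fun p => ENNReal.ofReal (l p.1 p.2 + C)
  have hf : Measurable f := Measure.measurable_rnDeriv _ _
  have hq : Measurable q := Measure.measurable_rnDeriv _ _
  have hL : Measurable L := by fun_prop
  have hg : Measurable g := hq.lintegral_prod_left'
  have hmq : m = ν.withDensity g := hQm ▸ map_snd_eq_withDensity hQac
  have hdis := fun {H : X × Y → ℝ≥0∞} (hH : Measurable H) =>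
    ae_mul_lintegral_eq_lintegral_mul_rnDeriv hQ hQac hg hmq hH
  have hW : Measurable (ratio f q) := measurable_ratio hf hq
  have core : ∀ᵐ y ∂ν, g y * ENNReal.ofReal (Tval lam l κ y + C)
      ≤ ∫⁻ x, f (x, y) * L (x, y) ∂lam + ∫⁻ x, absDiff (f (x, y)) (q (x, y)) ∂lam := by
    filter_upwards [lintegral_rnDeriv_slice_ae_eq_of_map_snd_eq hPac hQac (hPm.trans hQm.symm),
      ae_lintegral_rnDeriv_slice_lt_top lam ν Q, ae_ae_rnDeriv_lt_top lam ν Q, hdis hW,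
      hdis (hW.mul hL), hdis (Measurable.absDiff hW measurable_const)]
      with y hfg hg_fin hq_fin h1 h2 h3
    exact mul_ofReal_Tval_add_le (hκ y) (hl.comp measurable_prodMk_right) (fun x => hC x y)
      (hf.comp measurable_prodMk_right) (hq.comp measurable_prodMk_right) hq_fin hg_fin.ne hfg
      h1 h2 h3
  calc ∫⁻ y, ENNReal.ofReal (Tval lam l κ y + C) ∂m
      = ∫⁻ y, g y * ENNReal.ofReal (Tval lam l κ y + C) ∂ν := by
        rw [hmq, lintegral_withDensity_eq_lintegral_mul _ hg (by fun_prop)]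
        rfl
    _ ≤ ∫⁻ y, (∫⁻ x, f (x, y) * L (x, y) ∂lam + ∫⁻ x, absDiff (f (x, y)) (q (x, y)) ∂lam) ∂ν :=
        lintegral_mono_ae core
    _ = ∫⁻ p, f p * L p ∂lam.prod ν + ∫⁻ p, absDiff (f p) (q p) ∂lam.prod ν := by
        rw [lintegral_add_left (f := fun y => ∫⁻ x, f (x, y) * L (x, y) ∂lam)
            (hf.mul hL).lintegral_prod_left',
          lintegral_prod_symm' (fun p => f p * L p) (hf.mul hL),
          lintegral_prod_symm' _ (Measurable.absDiff hf hq)]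
    _ = _ := by rw [lintegral_rnDeriv_mul hPac hL.aemeasurable]


lemma integral_Tval_le_integral_add_tvJ {lam : Measure X} {ν : Measure Y} [SigmaFinite lam]
    [SigmaFinite ν] {l : X → Y → ℝ} (hl : Measurable fun p : X × Y => l p.1 p.2) {C : ℝ}
    (hC : ∀ x y, |l x y| ≤ C) {m : Measure Y} [IsProbabilityMeasure m] {κ : Kernel Y X}
    [IsMarkovKernel κ] (hκ : ∀ y, κ y ≪ lam) {Q : Measure (X × Y)} [IsFiniteMeasure Q]
    (hQ : Q = mixJoint m κ) (hQac : Q ≪ lam.prod ν) (hQm : Q.map Prod.snd = m)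
    (hT : Measurable (Tval lam l κ)) {P : Measure (X × Y)} [IsProbabilityMeasure P]
    (hPac : P ≪ lam.prod ν) (hPm : P.map Prod.snd = m) :
    ∫ y, Tval lam l κ y ∂m ≤ ∫ p, l p.1 p.2 ∂P + tvJ lam ν P Q := by
  have hL_fin : ∫⁻ p, ENNReal.ofReal (l p.1 p.2 + C) ∂P ≠ ∞ := by
    refine (Integrable.lintegral_lt_top ?_).ne
    exact (Integrable.of_bound (by fun_prop) C (.of_forall fun p => hC p.1 p.2)).add
      (integrable_const C)
  have hD_fin : ∫⁻ p, absDiff (P.rnDeriv (lam.prod ν) p) (Q.rnDeriv (lam.prod ν) p)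
      ∂lam.prod ν ≠ ∞ := by
    refine ne_top_of_le_ne_top ?_ (lintegral_mono fun p => absDiff_le_add _ _)
    rw [lintegral_add_left (Measure.measurable_rnDeriv _ _), Measure.lintegral_rnDeriv hPac,
      Measure.lintegral_rnDeriv hQac]
    finiteness
  have h := ENNReal.toReal_mono (ENNReal.add_ne_top.2 ⟨hL_fin, hD_fin⟩)
    (lintegral_ofReal_Tval_add_le hl hC hκ hQ hQac hQm hT hPac hPm)
  rw [ENNReal.toReal_add hL_fin hD_fin] at h
  rw [integral_eq_toReal_lintegral_ofReal_add_sub m hT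
      fun y => abs_Tval_le (fun x => hC x y) (hκ y),
    integral_eq_toReal_lintegral_ofReal_add_sub P hl fun p => hC p.1 p.2, tvJ,
    integral_abs_toReal_sub (Measure.measurable_rnDeriv _ _) (Measure.measurable_rnDeriv _ _)
      (Measure.rnDeriv_lt_top _ _) (Measure.rnDeriv_lt_top _ _)]
  linarith

end Joint

/-- lower bound in the joint+marginal lemma: if `y ↦ T(y)` is measurable, then
every probability measure `P` on `X×Y` with `P ≪ λ⊗ν` and `Y`-marginal `m` satisfies
`∫ l dP + ∫|dP − dQ| ≥ ∫_Y T(y) m(dy)`; consequently `R ≥ ∫_Y T(y) m(dy)`. -/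
theorem joint_marginal_lower_bound {X Y : Type*} [MeasurableSpace X] [MeasurableSpace Y]
    (lam : Measure X) (ν : Measure Y) [IsProbabilityMeasure lam] [IsProbabilityMeasure ν]
    (l : X → Y → ℝ) (hl_meas : Measurable fun p : X × Y => l p.1 p.2)
    (hl_bdd : ∃ C : ℝ, ∀ x y, |l x y| ≤ C)
    (m : Measure Y) [IsProbabilityMeasure m]
    (Q : Measure (X × Y)) [IsProbabilityMeasure Q]
    (hQac : Q ≪ lam.prod ν) (hQm : Q.map Prod.snd = m)
    -- the disintegration `Q(dx,dy) = ψ(dx|y) m(dy)` of `Q` over its Y-marginal `m`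
    (ψ : Y → Measure X) (hψ_meas : Measurable ψ)
    (hψ_prob : ∀ y, IsProbabilityMeasure (ψ y)) (hψ_ac : ∀ y, ψ y ≪ lam)
    (hdis : Q = mixJoint m ψ)
    (hT_meas : Measurable (Tval lam l ψ)) :
    (∀ P : Measure (X × Y), IsProbabilityMeasure P → P ≪ lam.prod ν →
        P.map Prod.snd = m →
        (∫ y, Tval lam l ψ y ∂m) ≤ (∫ p, l p.1 p.2 ∂P) + tvJ lam ν P Q)
      ∧ (∫ y, Tval lam l ψ y ∂m) ≤ Rval lam ν l m Q := by
  obtain ⟨C, hC⟩ := hl_bdd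
  let κ : Kernel Y X := ⟨ψ, hψ_meas⟩
  have : IsMarkovKernel κ := ⟨hψ_prob⟩
  have lower_bound : ∀ P : Measure (X × Y), IsProbabilityMeasure P → P ≪ lam.prod ν →
      P.map Prod.snd = m → (∫ y, Tval lam l ψ y ∂m) ≤ (∫ p, l p.1 p.2 ∂P) + tvJ lam ν P Q :=
    fun P _ hPac hPm => integral_Tval_le_integral_add_tvJ (κ := κ) hl_meas hC hψ_ac hdis hQac hQm
      hT_meas hPac hPm
  have : Nonempty {P : Measure (X × Y) //
      IsProbabilityMeasure P ∧ P ≪ lam.prod ν ∧ P.map Prod.snd = m} :=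
    ⟨⟨Q, inferInstance, hQac, hQm⟩⟩
  exact ⟨lower_bound, le_ciInf fun P => lower_bound P P.2.1 P.2.2.1 P.2.2.2⟩

end DIMG
end
end

section
/- Upper bound in the joint+marginal lemma via measurable selection: if ζ : Y → P(X) is a measurable map such that ζ(y) ∈ P*_y for every y ∈ Y (i.e. ∫_X l(x,y) ζ(y)(dx) + ∫_X |dζ(y)/dλ − dψ(·|y)/dλ| dλ = T(y) for all y), then the probability measure P_ζ(dx,dy) := ζ(y)(dx) m(dy) is feasible (it is absolutely continuous with respect to λ⊗ν and has Y-marginal m) and satisfies ∫ l dP_ζ + ∫ |dP_ζ − dQ| ≤ ∫_Y T(y) m(dy); in particular R ≤ ∫_Y T(y) m(dy). -/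
/-!
Integrating the optimality of `ζ y` against `m` gives
`∫ T dm = ∫ (∫ l(·,y) dζ_y) dm + ∫ ‖ζ_y − ψ_y‖₁ dm`, and the first term is `∫ l dP_ζ` by Fubini.
For the second, the `L¹` distance of the joint laws equals `∫ σ dP_ζ − ∫ σ dQ` for a measurable
`σ` with `|σ| ≤ 1`, and on each fibre `∫ σ dζ_y − ∫ σ dψ_y ≤ ‖ζ_y − ψ_y‖₁`.

The integral `∫ T dm` is only meaningful because `T` is measurable, which comes from the closed
form `T(y) = ∫ min(l(x,y), β(y) + 2) ψ(dx|y)`, with `β(y)` the `λ`-essential infimum of `l(·,y)`.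
It is a lower bound by the same fibrewise duality, the test function `min(l, β + 2)` taking values
in `[β, β + 2]` `λ`-a.e.; it is approached by moving the `ψ`-mass where `l > β + ε + 2` to where
`l < β + ε`.
-/

open MeasureTheory
open scoped ENNReal NNReal

noncomputable section

namespace DIMG

open ProbabilityTheory

section Bounded

variable {α : Type*} [MeasurableSpace α] {μ : Measure α} {f : α → ℝ} {C : ℝ}

lemma integrable_of_abs_le [IsFiniteMeasure μ] (hf : Measurable f) (hC : ∀ x, |f x| ≤ C) :
    Integrable f μ :=
  .of_bound hf.aestronglyMeasurable C (ae_of_all _ hC)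

lemma abs_integral_le_of_abs_le [IsProbabilityMeasure μ] (hC : ∀ x, |f x| ≤ C) :
    |∫ x, f x ∂μ| ≤ C := by
  simpa using norm_integral_le_of_norm_le_const (μ := μ) (f := f) (ae_of_all _ fun x => (hC x :))

end Bounded

section TotalVariation

variable {α : Type*} [MeasurableSpace α] {μ P Q R : Measure α}

lemma tvX_comm : tvX μ P Q = tvX μ Q P := by
  simp only [tvX, abs_sub_comm]

lemma tvX_nonneg : 0 ≤ tvX μ P Q :=
  integral_nonneg fun _ => abs_nonneg _

variable [SigmaFinite μ]

lemma integral_sub_integral_eq_integral_rnDeriv_sub_mul [IsFiniteMeasure P] [IsFiniteMeasure Q]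
    (hP : P ≪ μ) (hQ : Q ≪ μ) {g : α → ℝ} (hg : AEStronglyMeasurable g μ) {K : ℝ}
    (hgK : ∀ᵐ x ∂μ, |g x| ≤ K) :
    ∫ x, g x ∂P - ∫ x, g x ∂Q
      = ∫ x, ((P.rnDeriv μ x).toReal - (Q.rnDeriv μ x).toReal) * g x ∂μ := by
  simp_rw [sub_mul]
  rw [integral_sub (Measure.integrable_toReal_rnDeriv.mul_bdd hg hgK)
    (Measure.integrable_toReal_rnDeriv.mul_bdd hg hgK), ← integral_rnDeriv_smul hP,
    ← integral_rnDeriv_smul hQ]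
  rfl

lemma exists_tvX_eq_integral_sub [IsFiniteMeasure P] [IsFiniteMeasure Q]
    (hP : P ≪ μ) (hQ : Q ≪ μ) :
    ∃ σ : α → ℝ, Measurable σ ∧ (∀ x, |σ x| ≤ 1) ∧ tvX μ P Q = ∫ x, σ x ∂P - ∫ x, σ x ∂Q := by
  let σ : α → ℝ := fun x => if (Q.rnDeriv μ x).toReal < (P.rnDeriv μ x).toReal then 1 else -1
  have hσ_meas : Measurable σ :=
    Measurable.ite (measurableSet_lt (Measure.measurable_rnDeriv _ _).ennreal_toReal
      (Measure.measurable_rnDeriv _ _).ennreal_toReal) measurable_const measurable_const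
  have hσ_le : ∀ x, |σ x| ≤ 1 := fun x => by unfold σ; split_ifs <;> simp
  refine ⟨σ, hσ_meas, hσ_le, ?_⟩
  rw [integral_sub_integral_eq_integral_rnDeriv_sub_mul hP hQ hσ_meas.aestronglyMeasurable
    (ae_of_all _ hσ_le), tvX]
  refine integral_congr_ae (ae_of_all _ fun x => ?_)
  dsimp only [σ]
  split_ifs with h
  · rw [abs_of_pos (sub_pos.2 h), mul_one]
  · rw [abs_of_nonpos (sub_nonpos.2 (not_lt.1 h)), mul_neg_one]

lemma integral_sub_integral_le_tvX [IsProbabilityMeasure P] [IsProbabilityMeasure Q]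
    (hP : P ≪ μ) (hQ : Q ≪ μ) {g : α → ℝ} (hg : AEStronglyMeasurable g μ) {c : ℝ}
    (hgc : ∀ᵐ x ∂μ, |g x - c| ≤ 1) :
    ∫ x, g x ∂P - ∫ x, g x ∂Q ≤ tvX μ P Q := by
  have hg_bdd : ∀ᵐ x ∂μ, ‖g x‖ ≤ |c| + 1 := hgc.mono fun x hx => by
    have := abs_sub_abs_le_abs_sub (g x) c
    rw [Real.norm_eq_abs]; linarith
  have hgP : Integrable g P := .of_bound (hg.mono_ac hP) _ (hP.ae_le hg_bdd)
  have hgQ : Integrable g Q := .of_bound (hg.mono_ac hQ) _ (hQ.ae_le hg_bdd)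
  calc ∫ x, g x ∂P - ∫ x, g x ∂Q = ∫ x, (g x - c) ∂P - ∫ x, (g x - c) ∂Q := by
        rw [integral_sub hgP (integrable_const c), integral_sub hgQ (integrable_const c)]
        simp
    _ = ∫ x, ((P.rnDeriv μ x).toReal - (Q.rnDeriv μ x).toReal) * (g x - c) ∂μ :=
        integral_sub_integral_eq_integral_rnDeriv_sub_mul hP hQ
          (hg.sub aestronglyMeasurable_const) hgc
    _ ≤ tvX μ P Q := by
        have hd : Integrable (fun x => (P.rnDeriv μ x).toReal - (Q.rnDeriv μ x).toReal) μ :=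
          Measure.integrable_toReal_rnDeriv.sub Measure.integrable_toReal_rnDeriv
        refine integral_mono_ae (hd.mul_bdd (hg.sub aestronglyMeasurable_const) hgc) hd.abs ?_
        filter_upwards [hgc] with x hx
        calc _ ≤ |((P.rnDeriv μ x).toReal - (Q.rnDeriv μ x).toReal) * (g x - c)| := le_abs_self _
          _ ≤ |(P.rnDeriv μ x).toReal - (Q.rnDeriv μ x).toReal| := by
            rw [abs_mul]; exact mul_le_of_le_one_right (abs_nonneg _) hx

variable [IsFiniteMeasure P]

lemma tvX_add_le [IsFiniteMeasure Q] [IsFiniteMeasure R] (hR : R ≪ μ) :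
    tvX μ (P + R) Q ≤ R.real Set.univ + tvX μ P Q := by
  have hfP := Measure.integrable_toReal_rnDeriv (μ := P) (ν := μ)
  have hfQ := Measure.integrable_toReal_rnDeriv (μ := Q) (ν := μ)
  have hfR := Measure.integrable_toReal_rnDeriv (μ := R) (ν := μ)
  calc tvX μ (P + R) Q
      = ∫ x, |(P.rnDeriv μ x).toReal + (R.rnDeriv μ x).toReal - (Q.rnDeriv μ x).toReal| ∂μ := by
        refine integral_congr_ae ?_
        filter_upwards [Measure.rnDeriv_add P R μ, Measure.rnDeriv_lt_top P μ,
          Measure.rnDeriv_lt_top R μ] with x hx hPx hRx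
        rw [hx, Pi.add_apply, ENNReal.toReal_add hPx.ne hRx.ne]
    _ ≤ ∫ x, ((R.rnDeriv μ x).toReal + |(P.rnDeriv μ x).toReal - (Q.rnDeriv μ x).toReal|) ∂μ := by
        refine integral_mono ((hfP.add hfR).sub hfQ).abs (hfR.add (hfP.sub hfQ).abs) fun x => ?_
        rw [add_sub_right_comm, add_comm]
        exact (abs_add_le _ _).trans_eq (by rw [abs_of_nonneg ENNReal.toReal_nonneg])
    _ = R.real Set.univ + tvX μ P Q := by
        rw [integral_add hfR, Measure.integral_toReal_rnDeriv hR, tvX]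
        exact (hfP.sub hfQ).abs

lemma tvX_restrict (hP : P ≪ μ) {s : Set α} (hs : MeasurableSet s) :
    tvX μ (P.restrict s) P = P.real sᶜ := by
  calc tvX μ (P.restrict s) P = ∫ x, sᶜ.indicator (fun x => (P.rnDeriv μ x).toReal) x ∂μ := by
        refine integral_congr_ae ?_
        filter_upwards [Measure.rnDeriv_restrict P μ hs] with x hx
        by_cases h : x ∈ s <;> simp [hx, h]
    _ = P.real sᶜ := by
        rw [integral_indicator hs.compl, Measure.setIntegral_toReal_rnDeriv hP]

end TotalVariation

section EssInf

variable {X : Type*} [MeasurableSpace X] {lam : Measure X} {ℓ : X → ℝ} {C : ℝ}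

lemma ae_essInf_le_of_abs_le (hC : ∀ x, |ℓ x| ≤ C) : ∀ᵐ x ∂lam, essInf ℓ lam ≤ ℓ x :=
  ae_essInf_le (Filter.isBoundedUnder_of ⟨-C, fun x => (abs_le.1 (hC x)).1⟩)

lemma le_essInf_of_measure_lt_eq_zero [NeZero lam] (hC : ∀ x, |ℓ x| ≤ C) {r : ℝ}
    (hr : lam {x | ℓ x < r} = 0) : r ≤ essInf ℓ lam :=
  le_essInf_of_ae_le r (by simpa [Filter.EventuallyLE, ae_iff] using hr)
    (Filter.isBoundedUnder_of ⟨C, fun x => (abs_le.1 (hC x)).2⟩).isCoboundedUnder_flip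

lemma measure_lt_ne_zero_of_essInf_lt [NeZero lam] (hC : ∀ x, |ℓ x| ≤ C) {r : ℝ}
    (hr : essInf ℓ lam < r) : lam {x | ℓ x < r} ≠ 0 :=
  fun h => hr.not_ge (le_essInf_of_measure_lt_eq_zero hC h)

lemma measure_lt_eq_zero_of_lt_essInf (hC : ∀ x, |ℓ x| ≤ C) {r : ℝ}
    (hr : r < essInf ℓ lam) : lam {x | ℓ x < r} = 0 := by
  have := ae_lt_of_lt_essInf hr (Filter.isBoundedUnder_of ⟨-C, fun x => (abs_le.1 (hC x)).1⟩)
  rw [ae_iff] at this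
  exact measure_mono_null (fun x hx => not_lt.2 hx.le) this

end EssInf

section Interim

variable {X : Type*} [MeasurableSpace X] {lam ψ₀ : Measure X} [IsProbabilityMeasure ψ₀]
  {ℓ : X → ℝ} {C : ℝ}

lemma integral_min_le_integral_add_tvX [SigmaFinite lam] (hψ₀ : ψ₀ ≪ lam) {η : Measure X}
    [IsProbabilityMeasure η] (hη : η ≪ lam) (hℓ : Measurable ℓ) (hℓη : Integrable ℓ η) {b : ℝ}
    (hb : ∀ᵐ x ∂lam, b ≤ ℓ x) :
    ∫ x, min (ℓ x) (b + 2) ∂ψ₀ ≤ ∫ x, ℓ x ∂η + tvX lam η ψ₀ := by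
  have hM : ∀ᵐ x ∂lam, |min (ℓ x) (b + 2) - (b + 1)| ≤ 1 := by
    filter_upwards [hb] with x hx
    rw [abs_le]
    constructor
    · linarith [le_min hx (by linarith : b ≤ b + 2)]
    · linarith [min_le_right (ℓ x) (b + 2)]
  calc ∫ x, min (ℓ x) (b + 2) ∂ψ₀
      = (∫ x, min (ℓ x) (b + 2) ∂ψ₀ - ∫ x, min (ℓ x) (b + 2) ∂η)
        + ∫ x, min (ℓ x) (b + 2) ∂η := by ring
    _ ≤ tvX lam ψ₀ η + ∫ x, ℓ x ∂η :=
        add_le_add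
          (integral_sub_integral_le_tvX hψ₀ hη (hℓ.min measurable_const).aestronglyMeasurable hM)
          (integral_mono (hℓη.inf (integrable_const _)) hℓη fun x => min_le_left _ _)
    _ = ∫ x, ℓ x ∂η + tvX lam η ψ₀ := by rw [tvX_comm, add_comm]

lemma exists_integral_add_tvX_le [IsFiniteMeasure lam] (hψ₀ : ψ₀ ≪ lam) (hℓ : Measurable ℓ)
    (hC : ∀ x, |ℓ x| ≤ C) {r : ℝ} (hr : lam {x | ℓ x < r} ≠ 0) :
    ∃ η : Measure X, IsProbabilityMeasure η ∧ η ≪ lam ∧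
      ∫ x, ℓ x ∂η + tvX lam η ψ₀ ≤ ∫ x, min (ℓ x) (r + 2) ∂ψ₀ := by
  set A := {x | ℓ x < r}
  set B := {x | ℓ x ≤ r + 2}
  have hA : MeasurableSet A := measurableSet_lt hℓ measurable_const
  have hB : MeasurableSet B := measurableSet_le hℓ measurable_const
  have hℓ_int : ∀ (μ : Measure X) [IsFiniteMeasure μ], Integrable ℓ μ := fun _ _ =>
    integrable_of_abs_le hℓ hC
  have : IsProbabilityMeasure (lam[|A]) := cond_isProbabilityMeasure hr
  have : IsFiniteMeasure (ψ₀ Bᶜ • lam[|A]) := (lam[|A]).smul_finite (measure_ne_top _ _)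
  -- each unit of mass moved from `{ℓ > r + 2}` to `{ℓ < r}` costs `2` in `L¹` and saves more
  -- than `2` in `∫ ℓ`
  refine ⟨ψ₀.restrict B + ψ₀ Bᶜ • lam[|A], ⟨?_⟩, ?_, ?_⟩
  · simp [measure_add_measure_compl hB]
  · exact ((Measure.absolutelyContinuous_of_le Measure.restrict_le_self).trans hψ₀).add_left
      (cond_absolutelyContinuous.smul_left _)
  have hcond : ∫ x, ℓ x ∂(lam[|A]) ≤ r := by
    calc ∫ x, ℓ x ∂(lam[|A]) ≤ ∫ _, r ∂(lam[|A]) :=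
          integral_mono_ae (hℓ_int _) (integrable_const r)
            ((ae_cond_mem hA).mono fun x hx => le_of_lt hx)
      _ = r := by simp
  have htv : tvX lam (ψ₀.restrict B + ψ₀ Bᶜ • lam[|A]) ψ₀ ≤ ψ₀.real Bᶜ + ψ₀.real Bᶜ := by
    refine (tvX_add_le (cond_absolutelyContinuous.smul_left _)).trans_eq ?_
    rw [tvX_restrict hψ₀ hB]
    simp [Measure.real]
  have hmin : ∫ x, min (ℓ x) (r + 2) ∂ψ₀ = ∫ x in B, ℓ x ∂ψ₀ + ψ₀.real Bᶜ * (r + 2) := by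
    have hmin_int : Integrable (fun x => min (ℓ x) (r + 2)) ψ₀ :=
      (hℓ_int ψ₀).inf (integrable_const _)
    rw [← integral_add_compl hB hmin_int,
      setIntegral_congr_fun hB fun x hx => min_eq_left hx,
      setIntegral_congr_fun hB.compl fun x hx =>
        min_eq_right (le_of_lt (not_le.1 (show ¬ℓ x ≤ r + 2 from hx))),
      setIntegral_const, smul_eq_mul]
  rw [integral_add_measure (hℓ_int _) (hℓ_int _), integral_smul_measure, hmin, smul_eq_mul,
    ← measureReal_def]
  have : ψ₀.real Bᶜ * ∫ x, ℓ x ∂(lam[|A]) ≤ ψ₀.real Bᶜ * r :=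
    mul_le_mul_of_nonneg_left hcond measureReal_nonneg
  linarith

lemma iInf_integral_add_tvX_eq [IsFiniteMeasure lam] (hψ₀ : ψ₀ ≪ lam) (hℓ : Measurable ℓ)
    (hC : ∀ x, |ℓ x| ≤ C) :
    ⨅ η : {η : Measure X // IsProbabilityMeasure η ∧ η ≪ lam},
        (∫ x, ℓ x ∂(η : Measure X) + tvX lam (η : Measure X) ψ₀)
      = ∫ x, min (ℓ x) (essInf ℓ lam + 2) ∂ψ₀ := by
  have : NeZero lam := ⟨fun h => IsProbabilityMeasure.ne_zero ψ₀
    (Measure.absolutelyContinuous_zero_iff.1 (h ▸ hψ₀))⟩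
  have : Nonempty {η : Measure X // IsProbabilityMeasure η ∧ η ≪ lam} :=
    ⟨⟨ψ₀, inferInstance, hψ₀⟩⟩
  set b := essInf ℓ lam
  have hlow : ∀ η : {η : Measure X // IsProbabilityMeasure η ∧ η ≪ lam},
      ∫ x, min (ℓ x) (b + 2) ∂ψ₀ ≤ ∫ x, ℓ x ∂(η : Measure X) + tvX lam (η : Measure X) ψ₀ :=
    fun ⟨η, hη, hηac⟩ => integral_min_le_integral_add_tvX hψ₀ hηac hℓ
      (integrable_of_abs_le hℓ hC) (ae_essInf_le_of_abs_le hC)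
  refine le_antisymm (le_of_forall_pos_le_add fun ε hε => ?_) (le_ciInf hlow)
  obtain ⟨η, hη, hηac, hηval⟩ := exists_integral_add_tvX_le hψ₀ hℓ hC
    (measure_lt_ne_zero_of_essInf_lt hC (lt_add_of_pos_right b hε))
  have hmin_int : ∀ c : ℝ, Integrable (fun x => min (ℓ x) c) ψ₀ := fun c =>
    (integrable_of_abs_le hℓ hC).inf (integrable_const c)
  calc _ ≤ ∫ x, ℓ x ∂η + tvX lam η ψ₀ :=
        ciInf_le ⟨_, Set.forall_mem_range.2 hlow⟩ (⟨η, hη, hηac⟩ : {η : Measure X // _})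
    _ ≤ ∫ x, min (ℓ x) (b + ε + 2) ∂ψ₀ := hηval
    _ ≤ ∫ x, (min (ℓ x) (b + 2) + ε) ∂ψ₀ := by
        refine integral_mono (hmin_int _) ((hmin_int _).add (integrable_const ε)) fun x => ?_
        rw [← min_add_add_right]
        exact min_le_min (by linarith) (by linarith)
    _ = ∫ x, min (ℓ x) (b + 2) ∂ψ₀ + ε := by
        rw [integral_add (hmin_int _) (integrable_const ε)]
        simp

end Interim

section MixJoint

variable {X Y : Type*} [MeasurableSpace X] [MeasurableSpace Y] {m : Measure Y}
  {ρ : Y → Measure X} [∀ y, IsProbabilityMeasure (ρ y)]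

instance isMarkovKernel_mk (hρ : Measurable ρ) : IsMarkovKernel (⟨ρ, hρ⟩ : Kernel Y X) :=
  ⟨fun y => inferInstanceAs (IsProbabilityMeasure (ρ y))⟩

lemma integrable_integral_slice [IsFiniteMeasure m] (hρ : Measurable ρ) {f : X × Y → ℝ}
    (hf : Measurable f) {K : ℝ} (hfK : ∀ p, |f p| ≤ K) :
    Integrable (fun y => ∫ x, f (x, y) ∂ρ y) m := by
  refine .of_bound (StronglyMeasurable.integral_kernel_prod_left' (κ := ⟨ρ, hρ⟩)
    hf.stronglyMeasurable).aestronglyMeasurable K (ae_of_all _ fun y => ?_)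
  exact abs_integral_le_of_abs_le fun x => hfK (x, y)

lemma mixJoint_eq_map_swap_compProd [SFinite m] (hρ : Measurable ρ) :
    mixJoint m ρ = (m ⊗ₘ (⟨ρ, hρ⟩ : Kernel Y X)).map Prod.swap := by
  ext s hs
  have hmap : Measurable fun y => (ρ y).map fun x => (x, y) :=
    Measure.measurable_of_measurable_coe _ fun t ht => by
      simp_rw [Measure.map_apply measurable_prodMk_right ht]
      exact Kernel.measurable_kernel_prodMk_right (κ := ⟨ρ, hρ⟩) ht
  rw [mixJoint, Measure.bind_apply hs hmap.aemeasurable, Measure.map_apply measurable_swap hs,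
    Measure.compProd_apply (hs.preimage measurable_swap)]
  simp_rw [Measure.map_apply measurable_prodMk_right hs]
  rfl

lemma isProbabilityMeasure_mixJoint [IsProbabilityMeasure m] (hρ : Measurable ρ) :
    IsProbabilityMeasure (mixJoint m ρ) := by
  rw [mixJoint_eq_map_swap_compProd hρ]
  exact Measure.isProbabilityMeasure_map measurable_swap.aemeasurable

lemma mixJoint_map_snd [SFinite m] (hρ : Measurable ρ) : (mixJoint m ρ).map Prod.snd = m := by
  rw [mixJoint_eq_map_swap_compProd hρ, Measure.map_map measurable_snd measurable_swap]
  exact Measure.fst_compProd m _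

lemma mixJoint_absolutelyContinuous [SFinite m] (hρ : Measurable ρ) {lam : Measure X}
    [SFinite lam] {ν : Measure Y} [SFinite ν] (hm : m ≪ ν) (hρlam : ∀ y, ρ y ≪ lam) :
    mixJoint m ρ ≪ lam.prod ν := by
  rw [mixJoint_eq_map_swap_compProd hρ, ← Measure.prod_swap, ← Measure.compProd_const]
  exact (hm.compProd (ae_of_all _ hρlam)).map measurable_swap

lemma integral_mixJoint [SFinite m] (hρ : Measurable ρ) {f : X × Y → ℝ}
    (hf : Integrable f (mixJoint m ρ)) :
    ∫ p, f p ∂(mixJoint m ρ) = ∫ y, ∫ x, f (x, y) ∂ρ y ∂m := by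
  rw [mixJoint_eq_map_swap_compProd hρ] at hf ⊢
  rw [integral_map measurable_swap.aemeasurable hf.aestronglyMeasurable,
    Measure.integral_compProd (f := fun q => f q.swap)
      ((integrable_map_measure hf.aestronglyMeasurable measurable_swap.aemeasurable).1 hf)]
  rfl

end MixJoint

section Joint

variable {X Y : Type*} [MeasurableSpace X] [MeasurableSpace Y] {lam : Measure X} {ν : Measure Y}
  {m : Measure Y} {l : X → Y → ℝ} {C : ℝ}

lemma measurable_essInf_slice [SFinite lam] [NeZero lam]
    (hl : Measurable fun p : X × Y => l p.1 p.2) (hC : ∀ x y, |l x y| ≤ C) :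
    Measurable fun y => essInf (fun x => l x y) lam := by
  refine measurable_of_Ioi fun t => ?_
  have hpre : (fun y => essInf (fun x => l x y) lam) ⁻¹' Set.Ioi t
      = ⋃ q : ℚ, {_y : Y | t < q} ∩ {y | lam {x | l x y < q} = 0} := by
    ext y
    simp only [Set.mem_preimage, Set.mem_Ioi, Set.mem_iUnion, Set.mem_inter_iff,
      Set.mem_ofPred_eq]
    constructor
    · intro hy
      obtain ⟨q, htq, hq⟩ := exists_rat_btwn hy
      exact ⟨q, htq, measure_lt_eq_zero_of_lt_essInf (hC · y) hq⟩
    · rintro ⟨q, htq, hq⟩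
      exact htq.trans_le (le_essInf_of_measure_lt_eq_zero (hC · y) hq)
  rw [hpre]
  exact .iUnion fun q => (MeasurableSet.const _).inter <|
    measurable_measure_prodMk_right (measurableSet_lt hl measurable_const)
      (measurableSet_singleton 0)

lemma integrable_Tval [IsFiniteMeasure lam] [NeZero lam] [IsFiniteMeasure m]
    (hl : Measurable fun p : X × Y => l p.1 p.2) (hC : ∀ x y, |l x y| ≤ C) {ψ : Y → Measure X}
    (hψ : Measurable ψ) [∀ y, IsProbabilityMeasure (ψ y)] (hψlam : ∀ y, ψ y ≪ lam) :
    Integrable (Tval lam l ψ) m := by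
  have hTval : Tval lam l ψ
      = fun y => ∫ x, min (l x y) (essInf (fun x => l x y) lam + 2) ∂ψ y :=
    funext fun y => iInf_integral_add_tvX_eq (hψlam y) (hl.comp measurable_prodMk_right) (hC · y)
  rw [hTval]
  refine integrable_integral_slice hψ (K := C)
    (f := fun p => min (l p.1 p.2) (essInf (fun x => l x p.2) lam + 2))
    (hl.min (((measurable_essInf_slice hl hC).comp measurable_snd).add_const 2)) fun p => ?_
  have hb : -C ≤ essInf (fun x => l x p.2) lam :=
    le_essInf_of_measure_lt_eq_zero (hC · p.2) (by
      simp [fun x => not_lt.2 (abs_le.1 (hC x p.2)).1])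
  have := abs_le.1 (hC p.1 p.2)
  rw [abs_le]
  constructor
  · exact le_min this.1 (by linarith)
  · exact (min_le_left _ _).trans this.2

lemma tvJ_mixJoint_le [SigmaFinite lam] [SigmaFinite ν] [IsProbabilityMeasure m]
    (hm : m ≪ ν) {ζ ψ : Y → Measure X} (hζ : Measurable ζ) [∀ y, IsProbabilityMeasure (ζ y)]
    (hζlam : ∀ y, ζ y ≪ lam) (hψ : Measurable ψ) [∀ y, IsProbabilityMeasure (ψ y)]
    (hψlam : ∀ y, ψ y ≪ lam) (htv : Integrable (fun y => tvX lam (ζ y) (ψ y)) m) :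
    tvJ lam ν (mixJoint m ζ) (mixJoint m ψ) ≤ ∫ y, tvX lam (ζ y) (ψ y) ∂m := by
  have := isProbabilityMeasure_mixJoint (m := m) hζ
  have := isProbabilityMeasure_mixJoint (m := m) hψ
  obtain ⟨σ, hσ, hσ1, htvJ⟩ := exists_tvX_eq_integral_sub
    (mixJoint_absolutelyContinuous hζ hm hζlam) (mixJoint_absolutelyContinuous hψ hm hψlam)
  have hσ_int : ∀ P : Measure (X × Y), [IsFiniteMeasure P] → Integrable σ P := fun _ _ =>
    integrable_of_abs_le hσ hσ1
  have hζσ := integrable_integral_slice (m := m) hζ hσ hσ1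
  have hψσ := integrable_integral_slice (m := m) hψ hσ hσ1
  calc tvJ lam ν (mixJoint m ζ) (mixJoint m ψ)
      = ∫ p, σ p ∂(mixJoint m ζ) - ∫ p, σ p ∂(mixJoint m ψ) := htvJ
    _ = ∫ y, (∫ x, σ (x, y) ∂ζ y - ∫ x, σ (x, y) ∂ψ y) ∂m := by
        rw [integral_mixJoint hζ (hσ_int _), integral_mixJoint hψ (hσ_int _),
          ← integral_sub hζσ hψσ]
    _ ≤ ∫ y, tvX lam (ζ y) (ψ y) ∂m :=
        integral_mono (hζσ.sub hψσ) htv fun y =>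
          integral_sub_integral_le_tvX (c := 0) (hζlam y) (hψlam y)
            (hσ.comp measurable_prodMk_right).aestronglyMeasurable
            (ae_of_all _ fun x => by simpa using hσ1 (x, y))

lemma Rval_le {Q : Measure (X × Y)} (hC : ∀ x y, |l x y| ≤ C)
    {P : Measure (X × Y)} [IsProbabilityMeasure P] (hP : P ≪ lam.prod ν)
    (hPm : P.map Prod.snd = m) :
    Rval lam ν l m Q ≤ ∫ p, l p.1 p.2 ∂P + tvJ lam ν P Q := by
  refine ciInf_le ⟨-C, ?_⟩ (⟨P, inferInstance, hP, hPm⟩ : {P : Measure (X × Y) // _})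
  rintro _ ⟨⟨P', hP', -, -⟩, rfl⟩
  have hlP' : |∫ p, l p.1 p.2 ∂P'| ≤ C := abs_integral_le_of_abs_le fun p => hC p.1 p.2
  have : 0 ≤ tvJ lam ν P' Q := tvX_nonneg
  linarith [(abs_le.1 hlP').1]

end Joint

theorem joint_marginal_upper_bound_general {X Y : Type*} [MeasurableSpace X] [MeasurableSpace Y]
    (lam : Measure X) (ν : Measure Y) [IsProbabilityMeasure lam] [IsProbabilityMeasure ν]
    (l : X → Y → ℝ) (hl_meas : Measurable fun p : X × Y => l p.1 p.2)
    (hl_bdd : ∃ C : ℝ, ∀ x y, |l x y| ≤ C)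
    (m : Measure Y) [IsProbabilityMeasure m]
    (Q : Measure (X × Y))
    (hQac : Q ≪ lam.prod ν)
    -- the disintegration `Q(dx,dy) = ψ(dx|y) m(dy)` of `Q` over its Y-marginal `m`
    (ψ : Y → Measure X) (hψ_meas : Measurable ψ)
    (hψ_prob : ∀ y, IsProbabilityMeasure (ψ y)) (hψ_ac : ∀ y, ψ y ≪ lam)
    (hdis : Q = mixJoint m ψ)
    (ζ : Y → Measure X) (hζ_meas : Measurable ζ)
    (hζ_prob : ∀ y, IsProbabilityMeasure (ζ y)) (hζ_ac : ∀ y, ζ y ≪ lam)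
    (hζ_opt : ∀ y, (∫ x, l x y ∂(ζ y)) + tvX lam (ζ y) (ψ y) = Tval lam l ψ y) :
    IsProbabilityMeasure (mixJoint m ζ)
      ∧ mixJoint m ζ ≪ lam.prod ν
      ∧ (mixJoint m ζ).map Prod.snd = m
      ∧ (∫ p, l p.1 p.2 ∂(mixJoint m ζ)) + tvJ lam ν (mixJoint m ζ) Q
          ≤ ∫ y, Tval lam l ψ y ∂m
      ∧ Rval lam ν l m Q ≤ ∫ y, Tval lam l ψ y ∂m := by
  obtain ⟨C, hC⟩ := hl_bdd
  subst hdis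
  have hmν : m ≪ ν := by
    simpa [mixJoint_map_snd hψ_meas, Measure.map_snd_prod] using hQac.map measurable_snd
  have hPζ := isProbabilityMeasure_mixJoint (m := m) hζ_meas
  have hPζ_ac := mixJoint_absolutelyContinuous hζ_meas hmν hζ_ac
  have hl_int : Integrable (fun p : X × Y => l p.1 p.2) (mixJoint m ζ) :=
    integrable_of_abs_le hl_meas fun p => hC p.1 p.2
  have hcost_int := integrable_integral_slice (m := m) hζ_meas hl_meas fun p => hC p.1 p.2
  have htv_int : Integrable (fun y => tvX lam (ζ y) (ψ y)) m := by
    refine ((integrable_Tval hl_meas hC hψ_meas hψ_ac).sub hcost_int).congr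
      (ae_of_all _ fun y => ?_)
    simp only [Pi.sub_apply, ← hζ_opt y]
    ring
  have hvalue : ∫ p, l p.1 p.2 ∂(mixJoint m ζ) + tvJ lam ν (mixJoint m ζ) (mixJoint m ψ)
      ≤ ∫ y, Tval lam l ψ y ∂m := by
    rw [integral_mixJoint hζ_meas hl_int, ← funext hζ_opt, integral_add hcost_int htv_int]
    exact add_le_add le_rfl (tvJ_mixJoint_le hmν hζ_meas hζ_ac hψ_meas hψ_ac htv_int)
  exact ⟨hPζ, hPζ_ac, mixJoint_map_snd hζ_meas, hvalue,
    (Rval_le hC hPζ_ac (mixJoint_map_snd hζ_meas)).trans hvalue⟩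

/-- upper bound in the joint+marginal lemma via measurable selection: if
`ζ : Y → P(X)` is a measurable map with `ζ(y)` a minimizer of the parametric problem for every
`y` (i.e. `∫ l(x,y) ζ(y)(dx) + ∫ |dζ(y)/dλ − dψ(·|y)/dλ| dλ = T(y)`), then the probability
measure `P_ζ(dx,dy) := ζ(y)(dx) m(dy)` is feasible (a probability measure, absolutely
continuous w.r.t. `λ⊗ν`, with `Y`-marginal `m`) and satisfies
`∫ l dP_ζ + ∫ |dP_ζ − dQ| ≤ ∫_Y T(y) m(dy)`; in particular `R ≤ ∫_Y T(y) m(dy)`. -/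
theorem joint_marginal_upper_bound {X Y : Type*} [MeasurableSpace X] [MeasurableSpace Y]
    (lam : Measure X) (ν : Measure Y) [IsProbabilityMeasure lam] [IsProbabilityMeasure ν]
    (l : X → Y → ℝ) (hl_meas : Measurable fun p : X × Y => l p.1 p.2)
    (hl_bdd : ∃ C : ℝ, ∀ x y, |l x y| ≤ C)
    (m : Measure Y) [IsProbabilityMeasure m]
    (Q : Measure (X × Y)) [IsProbabilityMeasure Q]
    (hQac : Q ≪ lam.prod ν) (hQm : Q.map Prod.snd = m)
    -- the disintegration `Q(dx,dy) = ψ(dx|y) m(dy)` of `Q` over its Y-marginal `m`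
    (ψ : Y → Measure X) (hψ_meas : Measurable ψ)
    (hψ_prob : ∀ y, IsProbabilityMeasure (ψ y)) (hψ_ac : ∀ y, ψ y ≪ lam)
    (hdis : Q = mixJoint m ψ)
    (ζ : Y → Measure X) (hζ_meas : Measurable ζ)
    (hζ_prob : ∀ y, IsProbabilityMeasure (ζ y)) (hζ_ac : ∀ y, ζ y ≪ lam)
    (hζ_opt : ∀ y, (∫ x, l x y ∂(ζ y)) + tvX lam (ζ y) (ψ y) = Tval lam l ψ y) :
    IsProbabilityMeasure (mixJoint m ζ)
      ∧ mixJoint m ζ ≪ lam.prod ν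
      ∧ (mixJoint m ζ).map Prod.snd = m
      ∧ (∫ p, l p.1 p.2 ∂(mixJoint m ζ)) + tvJ lam ν (mixJoint m ζ) Q
          ≤ ∫ y, Tval lam l ψ y ∂m
      ∧ Rval lam ν l m Q ≤ ∫ y, Tval lam l ψ y ∂m :=
  joint_marginal_upper_bound_general lam ν l hl_meas hl_bdd m Q hQac ψ hψ_meas hψ_prob hψ_ac hdis ζ
    hζ_meas hζ_prob hζ_ac hζ_opt

end DIMG
end
end
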